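/- arXiv:2501.17556 — 4 statements merged into one kernel-verified Lean document; each statement's English description precedes it below -/
import Mathlib

section
/- Let G be a simple graph on a finite vertex set V. Let an outer total preorder on V be given and, for each part P of the outer preorder, an inner total preorder on P, and let the combined preorder on V be the lexicographic refinement of the outer preorder by the inner preorders. If the outer preorder has width at most w_out and every inner preorder has width at most w_in, then the combined preorder has width at most 2 ^ (w_in + 3 * w_out). -/
/-!
Let `v₀` be outer-maximal in a prefix `D` of the combined preorder. Then `D` is the union of the
outer prefix `A` of elements strictly below `v₀` and an inner prefix `Q` of the part of `v₀`, and
`D` lies inside the outer prefix `X` of elements below `v₀`. Since `X \ D` avoids `A` and `Q`, the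
neighbourhood outside `D` of a vertex of `A` (resp. `Q`) is determined by its neighbourhoods
outside `X` and outside `A` (resp. `Q`), so
`rank D ≤ rank X * (rank A + rank Q) ≤ w_out * (w_out + w_in)`.
-/

/-- The external neighbourhood of a vertex `v` relative to a subset `X`:
the neighbours of `v` that lie outside `X`. -/
def extNbhd {V : Type*} (G : SimpleGraph V) (X : Set V) (v : V) : Set V :=
  {w | w ∉ X ∧ G.Adj v w}

/-- The rank of a subset `X` of vertices: the number of equivalence classes of `X`
under the relation identifying vertices with the same neighbourhood outside `X`,
i.e. the number of distinct external neighbourhoods of vertices of `X`. -/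
noncomputable def rankOf {V : Type*} (G : SimpleGraph V) (X : Set V) : ℕ :=
  Set.ncard (extNbhd G X '' X)

open Set

theorem Set.ncard_image_le_mul_of_factor {α β γ δ : Type*} [Finite β] [Finite γ]
    (f : α → β) (g : α → γ) (h : β → γ → δ) (s : Set α) :
    ((fun a => h (f a) (g a)) '' s).ncard ≤ (f '' s).ncard * (g '' s).ncard := by
  have hsub : (fun a => h (f a) (g a)) '' s ⊆ image2 h (f '' s) (g '' s) := by
    rintro _ ⟨a, ha, rfl⟩
    exact mem_image2_of_mem (mem_image_of_mem f ha) (mem_image_of_mem g ha)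
  calc ((fun a => h (f a) (g a)) '' s).ncard ≤ (image2 h (f '' s) (g '' s)).ncard :=
        ncard_le_ncard hsub (toFinite _)
    _ ≤ ((f '' s) ×ˢ (g '' s)).ncard := by rw [← image_prod]; exact ncard_image_le (toFinite _)
    _ = (f '' s).ncard * (g '' s).ncard := ncard_prod

theorem Set.Finite.exists_forall_rel_of_total {α : Type*} {r : α → α → Prop}
    (htrans : ∀ a b c, r a b → r b c → r a c) (htotal : ∀ a b, r a b ∨ r b a)
    {s : Set α} (hs : s.Finite) (hne : s.Nonempty) : ∃ m ∈ s, ∀ x ∈ s, r x m := by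
  let : Preorder α :=
    { le := r, le_refl := fun a => (htotal a a).elim id id, le_trans := htrans }
  obtain ⟨m, hm⟩ := hs.exists_maximal hne
  exact ⟨m, hm.prop, fun x hx => (htotal x m).elim id (hm.2 hx)⟩

theorem Nat.mul_add_le_two_pow (a b : ℕ) : a * (a + b) ≤ 2 ^ (b + 3 * a) :=
  calc a * (a + b) ≤ 2 ^ a * 2 ^ (a + b) :=
        Nat.mul_le_mul a.lt_two_pow_self.le (a + b).lt_two_pow_self.le
    _ = 2 ^ (b + 2 * a) := by rw [← pow_add]; ring_nf
    _ ≤ 2 ^ (b + 3 * a) := Nat.pow_le_pow_right two_pos (by omega)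

namespace SimpleGraph

variable {V : Type*} (G : SimpleGraph V)

theorem extNbhd_eq_union_inter {B D X : Set V} (hBD : B ⊆ D) (hDX : D ⊆ X) (v : V) :
    extNbhd G D v = extNbhd G X v ∪ (extNbhd G B v ∩ (X \ D)) := by
  ext w
  have hwB := @hBD w
  have hwD := @hDX w
  simp only [extNbhd, mem_union, mem_inter_iff, mem_sdiff, mem_ofPred_eq]
  tauto

theorem ncard_image_extNbhd_le_rankOf_mul [Finite V] {B D X : Set V} (hBD : B ⊆ D)
    (hDX : D ⊆ X) : (extNbhd G D '' B).ncard ≤ rankOf G X * rankOf G B := by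
  rw [image_congr fun v _ => extNbhd_eq_union_inter G hBD hDX v]
  refine (ncard_image_le_mul_of_factor _ _ (fun N M => N ∪ (M ∩ (X \ D))) B).trans ?_
  exact Nat.mul_le_mul_right _
    (ncard_le_ncard (image_mono (hBD.trans hDX)) (toFinite _))

theorem rankOf_union_le [Finite V] {B C X : Set V} (hBX : B ∪ C ⊆ X) :
    rankOf G (B ∪ C) ≤ rankOf G X * (rankOf G B + rankOf G C) :=
  calc rankOf G (B ∪ C) ≤ (extNbhd G (B ∪ C) '' B).ncard + (extNbhd G (B ∪ C) '' C).ncard := by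
        rw [rankOf, image_union]; exact ncard_union_le _ _
    _ ≤ rankOf G X * rankOf G B + rankOf G X * rankOf G C :=
        Nat.add_le_add (ncard_image_extNbhd_le_rankOf_mul G subset_union_left hBX)
          (ncard_image_extNbhd_le_rankOf_mul G subset_union_right hBX)
    _ = rankOf G X * (rankOf G B + rankOf G C) := (mul_add _ _ _).symm

end SimpleGraph

theorem width_combined_preorder_le_general {V : Type*} [Fintype V] (G : SimpleGraph V)
    (outerLe innerLe : V → V → Prop) (w_out w_in : ℕ)
    -- the outer relation is a total preorder on `V`
    (houter_trans : ∀ u v w, outerLe u v → outerLe v w → outerLe u w)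
    (houter_total : ∀ u v, outerLe u v ∨ outerLe v u)
    -- the outer preorder has width at most `w_out`
    (houter_width : ∀ D : Set V,
      (∀ v ∈ D, ∀ w, outerLe w v → w ∈ D) → rankOf G D ≤ w_out)
    -- on each part of the outer preorder, the inner preorder has width at most `w_in`
    (hinner_width : ∀ v₀ : V, ∀ D : Set V,
      D ⊆ {w | outerLe v₀ w ∧ outerLe w v₀} →
      (∀ v ∈ D, ∀ w, (outerLe v₀ w ∧ outerLe w v₀) → innerLe w v → w ∈ D) →
      rankOf G D ≤ w_in) :
    -- every prefix of the combined preorder has rank at most `2 ^ (w_in + 3 * w_out)`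
    ∀ D : Set V,
      (∀ v ∈ D, ∀ w,
        ((outerLe w v ∧ ¬ outerLe v w) ∨ ((outerLe w v ∧ outerLe v w) ∧ innerLe w v)) →
        w ∈ D) →
      rankOf G D ≤ 2 ^ (w_in + 3 * w_out) := by
  intro D hD
  rcases D.eq_empty_or_nonempty with rfl | hne
  · simp [rankOf]
  obtain ⟨v₀, hv₀D, hv₀max⟩ :=
    D.toFinite.exists_forall_rel_of_total houter_trans houter_total hne
  set X := {w | outerLe w v₀}
  set A := {w | outerLe w v₀ ∧ ¬ outerLe v₀ w}
  set Q := D ∩ {w | outerLe v₀ w ∧ outerLe w v₀}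
  have hD_eq : D = A ∪ Q := by
    refine subset_antisymm (fun v hv => ?_) (union_subset (fun w hw => hD v₀ hv₀D w (.inl hw))
      inter_subset_left)
    by_cases h : outerLe v₀ v
    · exact .inr ⟨hv, h, hv₀max v hv⟩
    · exact .inl ⟨hv₀max v hv, h⟩
  have hX : rankOf G X ≤ w_out :=
    houter_width X fun v hv w hwv => houter_trans w v v₀ hwv hv
  have hA : rankOf G A ≤ w_out := houter_width A fun v hv w hwv =>
    ⟨houter_trans w v v₀ hwv hv.1, fun h => hv.2 (houter_trans v₀ w v h hwv)⟩
  have hQ : rankOf G Q ≤ w_in := hinner_width v₀ Q inter_subset_right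
    fun v hv w hw hwv => ⟨hD v hv.1 w (.inr ⟨⟨houter_trans w v₀ v hw.2 hv.2.1,
      houter_trans v v₀ w hv.2.2 hw.1⟩, hwv⟩), hw⟩
  calc rankOf G D = rankOf G (A ∪ Q) := by rw [← hD_eq]
    _ ≤ rankOf G X * (rankOf G A + rankOf G Q) := G.rankOf_union_le (hD_eq ▸ hv₀max)
    _ ≤ w_out * (w_out + w_in) := by gcongr
    _ ≤ 2 ^ (w_in + 3 * w_out) := Nat.mul_add_le_two_pow _ _

/-- If the outer total preorder has width at most `w_out` and each inner total preorder
(one on each part of the outer preorder) has width at most `w_in`, then the combined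
(lexicographic) preorder has width at most `2 ^ (w_in + 3 * w_out)`. -/
theorem width_combined_preorder_le {V : Type*} [Fintype V] (G : SimpleGraph V)
    (outerLe innerLe : V → V → Prop) (w_out w_in : ℕ)
    -- the outer relation is a total preorder on `V`
    (houter_refl : ∀ v, outerLe v v)
    (houter_trans : ∀ u v w, outerLe u v → outerLe v w → outerLe u w)
    (houter_total : ∀ u v, outerLe u v ∨ outerLe v u)
    -- the inner relation is a total preorder on each part of the outer preorder
    (hinner_refl : ∀ v, innerLe v v)
    (hinner_trans : ∀ u v w, (outerLe u v ∧ outerLe v u) → (outerLe v w ∧ outerLe w v) →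
      innerLe u v → innerLe v w → innerLe u w)
    (hinner_total : ∀ u v, (outerLe u v ∧ outerLe v u) → innerLe u v ∨ innerLe v u)
    -- the outer preorder has width at most `w_out`
    (houter_width : ∀ D : Set V,
      (∀ v ∈ D, ∀ w, outerLe w v → w ∈ D) → rankOf G D ≤ w_out)
    -- on each part of the outer preorder, the inner preorder has width at most `w_in`
    (hinner_width : ∀ v₀ : V, ∀ D : Set V,
      D ⊆ {w | outerLe v₀ w ∧ outerLe w v₀} →
      (∀ v ∈ D, ∀ w, (outerLe v₀ w ∧ outerLe w v₀) → innerLe w v → w ∈ D) →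
      rankOf G D ≤ w_in) :
    -- every prefix of the combined preorder has rank at most `2 ^ (w_in + 3 * w_out)`
    ∀ D : Set V,
      (∀ v ∈ D, ∀ w,
        ((outerLe w v ∧ ¬ outerLe v w) ∨ ((outerLe w v ∧ outerLe v w) ∧ innerLe w v)) →
        w ∈ D) →
      rankOf G D ≤ 2 ^ (w_in + 3 * w_out) :=
  width_combined_preorder_le_general G outerLe innerLe w_out w_in houter_trans houter_total
    houter_width hinner_width
end

section
/- Let α be a type, let H : α → α → Prop be a symmetric and irreflexive relation, and let 𝒪 be a nonempty set of orientations of H. Then the following are equivalent: (i) there exists an orientation R₀ of H such that every R ∈ 𝒪 equals R₀ or equals the opposite of R₀ (the relation flip R₀, i.e., (A, B) ↦ R₀ B A); (ii) every two H-pairs are oriented consistently across 𝒪, i.e., for all A B C D with H A B and H C D and all R, R' ∈ 𝒪, one has (R A B ↔ R C D) ↔ (R' A B ↔ R' C D). -/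
def IsOrientation {α : Type*} (H R : α → α → Prop) : Prop :=
  (∀ A B : α, H A B → Xor' (R A B) (R B A)) ∧
  (∀ A B : α, ¬ H A B → ¬ R A B ∧ ¬ R B A)

namespace IsOrientation

variable {α : Type*} {H R S : α → α → Prop}

theorem flip (hR : IsOrientation H R) : IsOrientation H (flip R) :=
  ⟨fun A B hAB => (hR.1 A B hAB).symm,
    fun A B hAB => (hR.2 A B hAB).symm⟩

theorem flip_iff_not (hR : IsOrientation H R) {A B : α} (hAB : H A B) :
    _root_.flip R A B ↔ ¬ R A B := by
  rcases hR.1 A B hAB with h | h <;> simp [_root_.flip, h]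

theorem flip_iff_flip (hR : IsOrientation H R) {A B C D : α} (hAB : H A B) (hCD : H C D) :
    (_root_.flip R A B ↔ _root_.flip R C D) ↔ (R A B ↔ R C D) := by
  rw [hR.flip_iff_not hAB, hR.flip_iff_not hCD, not_iff_not]

theorem ext (hR : IsOrientation H R) (hS : IsOrientation H S)
    (h : ∀ A B, H A B → (R A B ↔ S A B)) : R = S := by
  funext A B
  by_cases hAB : H A B
  · exact propext (h A B hAB)
  · exact propext (iff_of_false (hR.2 A B hAB).1 (hS.2 A B hAB).1)

/-- `hcons` says that whether `R` and `S` agree on an `H`-pair does not depend on the pair. -/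
theorem eq_or_eq_flip_of_consistent (hR : IsOrientation H R) (hS : IsOrientation H S)
    (hcons : ∀ A B C D, H A B → H C D → ((R A B ↔ R C D) ↔ (S A B ↔ S C D))) :
    R = S ∨ R = _root_.flip S := by
  by_cases hagree : ∀ A B, H A B → (R A B ↔ S A B)
  · exact .inl (hR.ext hS hagree)
  · push Not at hagree
    obtain ⟨A, B, hAB, hdis⟩ := hagree
    refine .inr (hR.ext hS.flip fun C D hCD => ?_)
    rw [hS.flip_iff_not hCD]
    have := hcons A B C D hAB hCD
    tauto

end IsOrientation

theorem bipolar_iff_consistent_general {α : Type*} (H : α → α → Prop)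
    (𝒪 : Set (α → α → Prop)) (hne : 𝒪.Nonempty)
    (horient : ∀ R ∈ 𝒪, IsOrientation H R) :
    (∃ R₀ : α → α → Prop, IsOrientation H R₀ ∧
        ∀ R ∈ 𝒪, R = R₀ ∨ R = flip R₀) ↔
      (∀ A B C D : α, H A B → H C D → ∀ R ∈ 𝒪, ∀ R' ∈ 𝒪,
        ((R A B ↔ R C D) ↔ (R' A B ↔ R' C D))) := by
  constructor
  · rintro ⟨R₀, hR₀, hall⟩ A B C D hAB hCD R hR R' hR'
    have key : ∀ S ∈ 𝒪, (S A B ↔ S C D) ↔ (R₀ A B ↔ R₀ C D) := fun S hS => by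
      rcases hall S hS with rfl | rfl
      exacts [Iff.rfl, hR₀.flip_iff_flip hAB hCD]
    rw [key R hR, key R' hR']
  · intro hcons
    obtain ⟨R₁, hR₁⟩ := hne
    exact ⟨R₁, horient R₁ hR₁, fun R hR => (horient R hR).eq_or_eq_flip_of_consistent
      (horient R₁ hR₁) fun A B C D hAB hCD => hcons A B C D hAB hCD R hR R₁ hR₁⟩

/-- For a symmetric irreflexive relation `H` and a nonempty set `𝒪` of orientations of
`H`, the following are equivalent: (i) there is an orientation `R₀` of `H` such that
every member of `𝒪` is `R₀` or its opposite; (ii) every two `H`-pairs are oriented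
consistently across `𝒪`. -/
theorem bipolar_iff_consistent {α : Type*} (H : α → α → Prop)
    (hsymm : Symmetric H) (hirr : Irreflexive H)
    (𝒪 : Set (α → α → Prop)) (hne : 𝒪.Nonempty)
    (horient : ∀ R ∈ 𝒪, IsOrientation H R) :
    (∃ R₀ : α → α → Prop, IsOrientation H R₀ ∧
        ∀ R ∈ 𝒪, R = R₀ ∨ R = flip R₀) ↔
      (∀ A B C D : α, H A B → H C D → ∀ R ∈ 𝒪, ∀ R' ∈ 𝒪,
        ((R A B ↔ R C D) ↔ (R' A B ↔ R' C D))) :=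
  bipolar_iff_consistent_general H 𝒪 hne horient
end

section
/- Let (N, ≤) be a finite rooted tree, let C be a Strahler constraint on N, and let n be a natural number. Then either (1) there exists a subset S ⊆ N such that StrGe_S x n holds for some x ∈ S (the tree minor S has Strahler number at least n) and every pair of disjoint nodes of S satisfies C; or (2) there exists a split f : N → Fin n such that for all nodes x, y in the same layer of f, if x and y are disjoint then C x y does not hold. -/
/-!
For a node `x`, let `s(x)` be the largest Strahler number of a tree minor below `x` whose
disjoint pairs all satisfy `C`. If some `s(x) ≥ n`, the first alternative holds. Otherwise `s`
is a split of height `n`. Walking along visibility steps (comparable nodes of equal `s`-value)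
in a tree, two nodes of one layer have the same `s`-value `k` and a common upper bound `u` with
`s(u) ≤ k`. If they were disjoint with `C x y`, the minors witnessing `s(x)` and `s(y)` together
with `u` would form a minor below `u` of Strahler number `k + 1`, still satisfying `C` on disjoint
pairs because `C` is closed downwards: a contradiction.
-/

/-- The relative Strahler predicate: `StrGe S x 0` holds iff `x ∈ S`, and
`StrGe S x (n+1)` holds iff there are two incomparable elements of `S` below `x`,
each satisfying `StrGe S · n`. -/
def StrGe {N : Type*} [PartialOrder N] (S : Set N) : N → ℕ → Prop
  | x, 0 => x ∈ S
  | x, n + 1 => ∃ y ∈ S, ∃ z ∈ S, y ≤ x ∧ z ≤ x ∧ (¬ y ≤ z ∧ ¬ z ≤ y) ∧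
      StrGe S y n ∧ StrGe S z n

/-- Two nodes are visible under a split `f` if they are comparable, have the same
`f`-value, and every node strictly between them has `f`-value at most theirs. -/
def Visible {N : Type*} [PartialOrder N] {n : ℕ} (f : N → Fin n) (x y : N) : Prop :=
  (x ≤ y ∨ y ≤ x) ∧ f x = f y ∧
    ∀ z : N, ((x < z ∧ z < y) ∨ (y < z ∧ z < x)) → f z ≤ f x

section Strahler

variable {N : Type*} [PartialOrder N]

theorem StrGe.mono_set {S T : Set N} (hST : S ⊆ T) : ∀ {k : ℕ} {x : N}, StrGe S x k → StrGe T x k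
  | 0, _, h => hST h
  | _ + 1, _, ⟨y, hy, z, hz, hyx, hzx, hinc, hy', hz'⟩ =>
      ⟨y, hST hy, z, hST hz, hyx, hzx, hinc, hy'.mono_set hST, hz'.mono_set hST⟩

theorem StrGe.exists_lt {S : Set N} {x : N} {k : ℕ} (h : StrGe S x (k + 1)) :
    ∃ y ∈ S, y < x ∧ StrGe S y k := by
  obtain ⟨y, hy, z, -, hyx, hzx, hinc, hy', -⟩ := h
  exact ⟨y, hy, lt_of_le_of_ne hyx fun h => hinc.2 (h ▸ hzx), hy'⟩

theorem StrGe.exists_le_of_le {S : Set N} {x : N} {k m : ℕ} (hx : x ∈ S) (h : StrGe S x m)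
    (hkm : k ≤ m) : ∃ y ∈ S, y ≤ x ∧ StrGe S y k := by
  induction m generalizing x with
  | zero => exact ⟨x, hx, le_rfl, Nat.le_zero.mp hkm ▸ h⟩
  | succ m ih =>
    rcases hkm.eq_or_lt with rfl | hlt
    · exact ⟨x, hx, le_rfl, h⟩
    obtain ⟨y, hy, hyx, hy'⟩ := h.exists_lt
    obtain ⟨z, hz, hzy, hz'⟩ := ih hy hy' (Nat.le_of_lt_succ hlt)
    exact ⟨z, hz, hzy.trans hyx.le, hz'⟩

theorem StrGe.lt_ncard_Iic [Finite N] {S : Set N} : ∀ {k : ℕ} {x : N}, StrGe S x k →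
    k < (Set.Iic x).ncard
  | 0, x, _ => (Set.ncard_pos (Set.toFinite _)).mpr ⟨x, le_rfl⟩
  | _ + 1, _, h => by
    obtain ⟨y, -, hyx, hy⟩ := h.exists_lt
    exact lt_of_le_of_lt hy.lt_ncard_Iic (Set.ncard_lt_ncard (Set.Iic_ssubset_Iic.mpr hyx))

theorem incomparable_of_le_of_le (hchain : ∀ x y z : N, x ≤ y → x ≤ z → y ≤ z ∨ z ≤ y)
    {x y x' y' : N} (hxy : ¬ x ≤ y ∧ ¬ y ≤ x) (hx' : x' ≤ x) (hy' : y' ≤ y) :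
    ¬ x' ≤ y' ∧ ¬ y' ≤ x' :=
  ⟨fun h => (hchain x' x y hx' (h.trans hy')).elim hxy.1 hxy.2,
    fun h => (hchain y' y x hy' (h.trans hx')).elim hxy.2 hxy.1⟩

theorem exists_upper_bound_of_reflTransGen {α : Type*} [Preorder α]
    (hchain : ∀ x y z : N, x ≤ y → x ≤ z → y ≤ z ∨ z ≤ y) {R : N → N → Prop} {v : N → α}
    (hR : ∀ b c, R b c → (b ≤ c ∨ c ≤ b) ∧ v b = v c) {x y : N}
    (h : Relation.ReflTransGen R x y) : v y = v x ∧ ∃ u, x ≤ u ∧ y ≤ u ∧ v u ≤ v x := by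
  induction h with
  | refl => exact ⟨rfl, x, le_rfl, le_rfl, le_rfl⟩
  | @tail b c _ hbc ih =>
    obtain ⟨hvb, u, hxu, hbu, hu⟩ := ih
    obtain ⟨hcomp, hvbc⟩ := hR b c hbc
    refine ⟨hvbc ▸ hvb, ?_⟩
    rcases hcomp with hbc | hcb
    · rcases hchain b c u hbc hbu with hcu | huc
      · exact ⟨u, hxu, hcu, hu⟩
      · exact ⟨c, hxu.trans huc, le_rfl, (hvbc ▸ hvb).le⟩
    · exact ⟨u, hxu, hcb.trans hbu, hu⟩

variable (C : N → N → Prop)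

def DisjointPairsSatisfy (S : Set N) : Prop :=
  ∀ a ∈ S, ∀ b ∈ S, (¬ a ≤ b ∧ ¬ b ≤ a) → C a b

def strahlerValuesBelow (x : N) : Set ℕ :=
  {k | ∃ S : Set N, DisjointPairsSatisfy C S ∧ (∀ s ∈ S, s ≤ x) ∧ ∃ s ∈ S, StrGe S s k}

noncomputable def strahlerBelow (x : N) : ℕ :=
  sSup (strahlerValuesBelow C x)

variable {C}

theorem disjointPairsSatisfy_insert_union (hCsymm : ∀ x y, C x y → C y x)
    (hCdown : ∀ x y y', C x y → y' ≤ y → C x y') {S T : Set N} {x y u : N}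
    (hS : DisjointPairsSatisfy C S) (hT : DisjointPairsSatisfy C T) (hC : C x y)
    (hSx : ∀ s ∈ S, s ≤ x) (hTy : ∀ t ∈ T, t ≤ y) (hSu : ∀ s ∈ S, s ≤ u)
    (hTu : ∀ t ∈ T, t ≤ u) : DisjointPairsSatisfy C (insert u (S ∪ T)) := by
  have hcross : ∀ a ∈ S, ∀ b ∈ T, C a b := fun a ha b hb =>
    hCsymm _ _ (hCdown _ _ _ (hCsymm _ _ (hCdown _ _ _ hC (hTy b hb))) (hSx a ha))
  rintro a (rfl | ha | ha) b (rfl | hb | hb) hab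
  · exact absurd le_rfl hab.1
  · exact absurd (hSu b hb) hab.2
  · exact absurd (hTu b hb) hab.2
  · exact absurd (hSu a ha) hab.1
  · exact hS a ha b hb hab
  · exact hcross a ha b hb
  · exact absurd (hTu a ha) hab.1
  · exact hCsymm _ _ (hcross b hb a ha)
  · exact hT a ha b hb hab

variable [Finite N]

theorem bddAbove_strahlerValuesBelow (x : N) : BddAbove (strahlerValuesBelow C x) :=
  ⟨Nat.card N, fun _ ⟨_, _, _, _, _, hs⟩ => hs.lt_ncard_Iic.le.trans (Set.ncard_le_card _)⟩

theorem strahlerBelow_mem (x : N) : strahlerBelow C x ∈ strahlerValuesBelow C x := by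
  refine Nat.sSup_mem ⟨0, {x}, ?_, fun s hs => hs.le, x, rfl, rfl⟩ (bddAbove_strahlerValuesBelow x)
  rintro a rfl b rfl hab
  exact absurd le_rfl hab.1

theorem le_strahlerBelow {x : N} {k : ℕ} (h : k ∈ strahlerValuesBelow C x) :
    k ≤ strahlerBelow C x :=
  le_csSup (bddAbove_strahlerValuesBelow x) h

theorem exists_strGe_of_le_strahlerBelow {x : N} {k : ℕ} (hk : k ≤ strahlerBelow C x) :
    ∃ S : Set N, ∃ s ∈ S, StrGe S s k ∧ DisjointPairsSatisfy C S := by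
  obtain ⟨S, hS, -, s, hs, hstr⟩ := strahlerBelow_mem (C := C) x
  obtain ⟨y, hy, -, hy'⟩ := hstr.exists_le_of_le hs hk
  exact ⟨S, y, hy, hy', hS⟩

theorem strahlerBelow_lt_of_disjoint (hchain : ∀ x y z : N, x ≤ y → x ≤ z → y ≤ z ∨ z ≤ y)
    (hCsymm : ∀ x y, C x y → C y x) (hCdown : ∀ x y y', C x y → y' ≤ y → C x y')
    {x y u : N} (hC : C x y) (hxy : ¬ x ≤ y ∧ ¬ y ≤ x) (hxu : x ≤ u) (hyu : y ≤ u)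
    (hval : strahlerBelow C y = strahlerBelow C x) :
    strahlerBelow C x < strahlerBelow C u := by
  obtain ⟨S, hS, hSx, s, hs, hstrS⟩ := strahlerBelow_mem (C := C) x
  obtain ⟨T, hT, hTy, t, ht, hstrT⟩ := strahlerBelow_mem (C := C) y
  rw [hval] at hstrT
  have hSu : ∀ a ∈ S, a ≤ u := fun a ha => (hSx a ha).trans hxu
  have hTu : ∀ a ∈ T, a ≤ u := fun a ha => (hTy a ha).trans hyu
  refine le_strahlerBelow ⟨insert u (S ∪ T),
    disjointPairsSatisfy_insert_union hCsymm hCdown hS hT hC hSx hTy hSu hTu, ?_,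
    u, Set.mem_insert u _, ?_⟩
  · rintro a (rfl | ha | ha)
    exacts [le_rfl, hSu a ha, hTu a ha]
  · exact ⟨s, Or.inr (Or.inl hs), t, Or.inr (Or.inr ht), hSu s hs, hTu t ht,
      incomparable_of_le_of_le hchain hxy (hSx s hs) (hTy t ht),
      hstrS.mono_set fun _ ha => Or.inr (Or.inl ha), hstrT.mono_set fun _ ha => Or.inr (Or.inr ha)⟩

end Strahler

theorem strahler_dichotomy_general {N : Type*} [Fintype N] [PartialOrder N]
    (hchain : ∀ x y z : N, x ≤ y → x ≤ z → y ≤ z ∨ z ≤ y)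
    (C : N → N → Prop)
    (hCsymm : ∀ x y, C x y → C y x)
    (hCdown : ∀ x y y', C x y → y' ≤ y → C x y')
    (n : ℕ) :
    (∃ S : Set N, ∃ x ∈ S, StrGe S x n ∧
        ∀ a ∈ S, ∀ b ∈ S, (¬ a ≤ b ∧ ¬ b ≤ a) → C a b) ∨
    (∃ f : N → Fin n, ∀ x y : N,
        Relation.ReflTransGen (Visible f) x y → (¬ x ≤ y ∧ ¬ y ≤ x) → ¬ C x y) := by
  by_cases hL : ∃ S : Set N, ∃ x ∈ S, StrGe S x n ∧ DisjointPairsSatisfy C S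
  · exact Or.inl hL
  let f : N → Fin n := fun x =>
    ⟨strahlerBelow C x, lt_of_not_ge fun h => hL (exists_strGe_of_le_strahlerBelow h)⟩
  refine Or.inr ⟨f, fun x y hxy hdisj hC => ?_⟩
  obtain ⟨hfy, u, hxu, hyu, hfu⟩ :=
    exists_upper_bound_of_reflTransGen hchain (fun b c h => ⟨h.1, h.2.1⟩) hxy
  have hlt := strahlerBelow_lt_of_disjoint hchain hCsymm hCdown hC hdisj hxu hyu
    (congrArg Fin.val hfy)
  exact absurd (Fin.le_def.mp hfu) (not_le.mpr hlt)

/-- Strahler dichotomy: given a finite rooted tree with a Strahler constraint `C`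
and `n : ℕ`, either there is a tree minor of Strahler number at least `n` in which
all disjoint pairs satisfy `C`, or there is a split of height `n` such that no
disjoint pair within a layer satisfies `C`. -/
theorem strahler_dichotomy {N : Type*} [Fintype N] [PartialOrder N]
    (root : N) (hroot : ∀ x : N, x ≤ root)
    (hchain : ∀ x y z : N, x ≤ y → x ≤ z → y ≤ z ∨ z ≤ y)
    (C : N → N → Prop)
    (hCsymm : ∀ x y, C x y → C y x)
    (hCdisj : ∀ x y, C x y → ¬ x ≤ y ∧ ¬ y ≤ x)
    (hCdown : ∀ x y y', C x y → y' ≤ y → C x y')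
    (n : ℕ) :
    (∃ S : Set N, ∃ x ∈ S, StrGe S x n ∧
        ∀ a ∈ S, ∀ b ∈ S, (¬ a ≤ b ∧ ¬ b ≤ a) → C a b) ∨
    (∃ f : N → Fin n, ∀ x y : N,
        Relation.ReflTransGen (Visible f) x y → (¬ x ≤ y ∧ ¬ y ≤ x) → ¬ C x y) :=
  strahler_dichotomy_general hchain C hCsymm hCdown n
end

section
/- Let (N, ≤) be a finite nonempty rooted tree and let n be a natural number. Then either StrGe_N x n holds for some x ∈ N (the tree has Strahler number at least n), or there exists a split f : N → Fin n such that any two nodes in the same layer of f are comparable (every layer is a chain). -/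
/-!
Label every node by its Strahler number, capped at `n`. If no node reaches `n`, this is a
split of height `n`. Visible nodes carry equal labels, so a layer is a set of nodes of one
label, each comparable to the next. Such a set is a chain: a node `b` above two incomparable
nodes `x`, `c` of label `k` has Strahler number at least `k + 1`, so it cannot also carry
label `k`; and two nodes below a common node `b` are comparable because the order is a tree.
-/

open Relation

theorem comparable_of_reflTransGen_comparable_eq {N β : Type*} [PartialOrder N] [Preorder β]
    (hchain : ∀ x y z : N, x ≤ y → x ≤ z → y ≤ z ∨ z ≤ y) (r : N → β)
    (hr : ∀ x y z : N, y ≤ x → z ≤ x → ¬ y ≤ z → ¬ z ≤ y → r y = r z → r y < r x)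
    {x y : N} (h : ReflTransGen (fun a b => (a ≤ b ∨ b ≤ a) ∧ r a = r b) x y) :
    (x ≤ y ∨ y ≤ x) ∧ r x = r y := by
  induction h with
  | refl => exact ⟨Or.inl le_rfl, rfl⟩
  | @tail b c _ hbc ih =>
    obtain ⟨hxb | hbx, hrxb⟩ := ih <;> obtain ⟨hbc' | hcb, hrbc⟩ := hbc <;>
      refine ⟨?_, hrxb.trans hrbc⟩
    · exact Or.inl (hxb.trans hbc')
    · by_contra! hxc
      exact (hr b x c hxb hcb hxc.1 hxc.2 (hrxb.trans hrbc)).ne hrxb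
    · exact hchain b x c hbx hbc'
    · exact Or.inr (hcb.trans hbx)

section StrahlerRank

variable {N : Type*} [PartialOrder N]

open Classical in
noncomputable def strahlerRank (n : ℕ) (x : N) : ℕ :=
  Nat.findGreatest (StrGe (Set.univ : Set N) x) n

theorem strGe_strahlerRank (n : ℕ) (x : N) : StrGe Set.univ x (strahlerRank n x) := by
  classical
  exact Nat.findGreatest_spec (P := StrGe Set.univ x) (Nat.zero_le n) (Set.mem_univ x)

theorem strahlerRank_lt {n : ℕ} {x : N} (hx : ¬ StrGe Set.univ x n) : strahlerRank n x < n := by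
  classical
  exact (Nat.findGreatest_le n).lt_of_ne fun h => hx (h ▸ strGe_strahlerRank n x)

theorem strahlerRank_lt_of_incomparable {n : ℕ} {x y z : N} (hyx : y ≤ x) (hzx : z ≤ x)
    (hyz : ¬ y ≤ z) (hzy : ¬ z ≤ y) (heq : strahlerRank n y = strahlerRank n z)
    (hlt : strahlerRank n y < n) : strahlerRank n y < strahlerRank n x := by
  classical
  have hsucc : StrGe Set.univ x (strahlerRank n y + 1) :=
    ⟨y, Set.mem_univ y, z, Set.mem_univ z, hyx, hzx, ⟨hyz, hzy⟩,
      strGe_strahlerRank n y, heq ▸ strGe_strahlerRank n z⟩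
  exact Nat.le_findGreatest hlt hsucc

end StrahlerRank

theorem strahler_dichotomy_chains_general {N : Type*} [PartialOrder N]
    (hchain : ∀ x y z : N, x ≤ y → x ≤ z → y ≤ z ∨ z ≤ y)
    (n : ℕ) :
    (∃ x : N, StrGe (Set.univ : Set N) x n) ∨
    (∃ f : N → Fin n, ∀ x y : N,
        Relation.ReflTransGen (Visible f) x y → x ≤ y ∨ y ≤ x) := by
  by_cases H : ∃ x : N, StrGe (Set.univ : Set N) x n
  · exact Or.inl H
  have hlt (x : N) : strahlerRank n x < n := strahlerRank_lt fun hx => H ⟨x, hx⟩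
  refine Or.inr ⟨fun x => ⟨strahlerRank n x, hlt x⟩, fun x y hxy => ?_⟩
  refine (comparable_of_reflTransGen_comparable_eq hchain _ ?_
    (ReflTransGen.mono (fun a b hab => ⟨hab.1, hab.2.1⟩) x y hxy)).1
  intro a b c hba hca hbc hcb heq
  exact strahlerRank_lt_of_incomparable hba hca hbc hcb (Fin.ext_iff.mp heq) (hlt b)

/-- For a finite nonempty rooted tree and `n : ℕ`, either the tree has Strahler number
at least `n`, or there is a split of height `n` whose layers are all chains. -/
theorem strahler_dichotomy_chains {N : Type*} [Fintype N] [Nonempty N] [PartialOrder N]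
    (root : N) (hroot : ∀ x : N, x ≤ root)
    (hchain : ∀ x y z : N, x ≤ y → x ≤ z → y ≤ z ∨ z ≤ y)
    (n : ℕ) :
    (∃ x : N, StrGe (Set.univ : Set N) x n) ∨
    (∃ f : N → Fin n, ∀ x y : N,
        Relation.ReflTransGen (Visible f) x y → x ≤ y ∨ y ≤ x) :=
  strahler_dichotomy_chains_general hchain n
end
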